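/- arXiv:2212.01118 — 6 statements merged into one kernel-verified Lean document; each statement's English description precedes it below -/
import Mathlib

section
/- For a closed set S ⊆ ℝ^d, a point p ∈ S, and a nonzero vector v ∈ ℝ^d, if for some λ > 0 the set of closest points π_S(p + λv) is not exactly {p}, then for all λ' ≥ λ the set π_S(p + λ'v) is not exactly {p}, and for all λ' > λ the point p is not contained in π_S(p + λ'v). -/
/-!
If `p` is a nearest point of `S` to `x` and `y ≠ x` lies on the segment from `x` to `p`, then
`p` is the unique nearest point of `S` to `y`: a nearest point `q` to `y` satisfies
`dist x q ≤ dist x y + dist y q ≤ dist x y + dist y p = dist x p`, so the triangle inequality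
is an equality, which in a strictly convex space puts `q` on the ray from `x` through `y`, at
the same distance from `x` as `p`. For `λ < λ'` the point `p + λ • v` lies on the segment from
`p + λ' • v` to `p`.
-/

open Metric Set

noncomputable def proj {d : ℕ} (S : Set (EuclideanSpace ℝ (Fin d)))
    (x : EuclideanSpace ℝ (Fin d)) : Set (EuclideanSpace ℝ (Fin d)) :=
  {q ∈ S | dist x q = Metric.infDist x S}

lemma infDist_eq_dist_of_dist_add_dist_eq {α : Type*} [PseudoMetricSpace α] {s : Set α}
    {x y p : α} (hp : p ∈ s) (hx : infDist x s = dist x p)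
    (h : dist x y + dist y p = dist x p) : infDist y s = dist y p :=
  le_antisymm (infDist_le_dist_of_mem hp) <| by
    linarith [infDist_le_infDist_add_dist (s := s) (x := x) (y := y)]

section Torsor

variable {V P : Type*} [NormedAddCommGroup V] [NormedSpace ℝ V] [MetricSpace P]
  [NormedAddTorsor V P]

lemma Wbtw.eq_of_wbtw_of_dist_eq {x y p q : P} (hp : Wbtw ℝ x y p) (hq : Wbtw ℝ x y q)
    (hy : y ≠ x) (h : dist x p = dist x q) : p = q := by
  have hray : SameRay ℝ (p -ᵥ x) (q -ᵥ x) :=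
    hp.sameRay_vsub_left.symm.trans hq.sameRay_vsub_left
      fun h0 => (hy (vsub_eq_zero_iff_eq.mp h0)).elim
  refine vsub_left_cancel (hray.eq_of_norm_eq ?_)
  rwa [← dist_eq_norm_vsub', ← dist_eq_norm_vsub']

end Torsor

lemma proj_eq_singleton_of_wbtw {d : ℕ} {S : Set (EuclideanSpace ℝ (Fin d))}
    {x y p : EuclideanSpace ℝ (Fin d)} (hp : p ∈ proj S x) (hxyp : Wbtw ℝ x y p)
    (hy : y ≠ x) :
    proj S y = {p} := by
  obtain ⟨hpS, hxp⟩ := hp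
  have hyp : infDist y S = dist y p :=
    infDist_eq_dist_of_dist_add_dist_eq hpS hxp.symm hxyp.dist_add_dist
  ext q
  refine ⟨fun ⟨hqS, hyq⟩ => ?_, fun hq => hq ▸ ⟨hpS, hyp.symm⟩⟩
  have hxq : dist x p ≤ dist x q := hxp ▸ infDist_le_dist_of_mem hqS
  have htri : dist x q ≤ dist x y + dist y q := dist_triangle x y q
  have hxyq : Wbtw ℝ x y q := by
    rw [← dist_add_dist_eq_iff]
    linarith [hxyp.dist_add_dist]
  exact (hxyp.eq_of_wbtw_of_dist_eq hxyq hy (by linarith [hxyp.dist_add_dist])).symm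

theorem stmt0_general {d : ℕ} (S : Set (EuclideanSpace ℝ (Fin d)))
    (p : EuclideanSpace ℝ (Fin d))
    (v : EuclideanSpace ℝ (Fin d)) (hv : v ≠ 0) (lam : ℝ) (hlam : 0 < lam)
    (h : proj S (p + lam • v) ≠ {p}) :
    (∀ lam' : ℝ, lam ≤ lam' → proj S (p + lam' • v) ≠ {p}) ∧
    (∀ lam' : ℝ, lam < lam' → p ∉ proj S (p + lam' • v)) := by
  have beyond : ∀ lam' : ℝ, lam < lam' → p ∉ proj S (p + lam' • v) := by
    intro lam' hlt hmem
    have hwbtw : Wbtw ℝ (p + lam' • v) (p + lam • v) p := by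
      simpa only [vadd_eq_add, add_comm _ p] using
        (wbtw_smul_vadd_smul_vadd_of_nonneg_of_le p v hlam.le hlt.le).symm
    have hne : p + lam • v ≠ p + lam' • v := fun heq =>
      hlt.ne (smul_left_injective ℝ hv (add_left_cancel heq))
    exact h (proj_eq_singleton_of_wbtw hmem hwbtw hne)
  refine ⟨fun lam' hle heq => ?_, beyond⟩
  rcases hle.eq_or_lt with rfl | hlt
  · exact h heq
  · exact beyond lam' hlt (heq.symm ▸ mem_singleton p)

theorem stmt0 {d : ℕ} (S : Set (EuclideanSpace ℝ (Fin d))) (hS : IsClosed S)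
    (hne : S.Nonempty) (p : EuclideanSpace ℝ (Fin d)) (hp : p ∈ S)
    (v : EuclideanSpace ℝ (Fin d)) (hv : v ≠ 0) (lam : ℝ) (hlam : 0 < lam)
    (h : proj S (p + lam • v) ≠ {p}) :
    (∀ lam' : ℝ, lam ≤ lam' → proj S (p + lam' • v) ≠ {p}) ∧
    (∀ lam' : ℝ, lam < lam' → p ∉ proj S (p + lam' • v)) :=
  stmt0_general S p v hv lam hlam h
end

section
/- Let S ⊆ ℝ^d be closed, p ∈ S, and u a unit vector with positive and finite projection range d(p,u,π_S) := sup{λ ∈ ℝ : π_S(p + λu) = {p}}. Then the pair (p,u) belongs to the generalized normal bundle, i.e., u ∈ Nor(p,S): for every w ∈ Tan(p,S), ⟨u, w⟩ ≤ 0. -/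
/-! If `π_S(p + l • u) = {p}` for some `l > 0`, then every `q ∈ S` is at least as far from
`p + l • u` as `p` is, which expands to the proximal-normal inequality
`⟪u, q - p⟫ ≤ ‖q - p‖² / (2 l)`. Along a sequence `q → p` in a tangent direction `w / ‖w‖`
the right-hand side is `o(‖q - p‖)`, so `⟪u, w⟫ ≤ 0`. -/

open Metric Set
open scoped RealInnerProductSpace

def Tan {d : ℕ} (p : EuclideanSpace ℝ (Fin d)) (S : Set (EuclideanSpace ℝ (Fin d))) :
    Set (EuclideanSpace ℝ (Fin d)) :=
  {u | u = 0 ∨ (u ≠ 0 ∧ ∀ ε > (0 : ℝ), ∃ q ∈ S, 0 < ‖q - p‖ ∧ ‖q - p‖ < ε ∧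
      ‖‖q - p‖⁻¹ • (q - p) - ‖u‖⁻¹ • u‖ < ε)}

lemma nonpos_of_forall_pos_le_mul {a K : ℝ} (h : ∀ ε > 0, a ≤ K * ε) : a ≤ 0 := by
  by_contra! ha
  have hK : 0 < |K| + 1 := by positivity
  have := h (a / (|K| + 1)) (by positivity)
  rw [← mul_div_assoc, le_div_iff₀ hK] at this
  nlinarith [le_abs_self K]

lemma two_mul_inner_le_norm_sq_of_dist_le {E : Type*} [NormedAddCommGroup E]
    [InnerProductSpace ℝ E] {x p q : E} (h : dist x p ≤ dist x q) :
    2 * ⟪x - p, q - p⟫ ≤ ‖q - p‖ ^ 2 := by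
  have hsq : ‖x - p‖ ^ 2 ≤ ‖(x - p) - (q - p)‖ ^ 2 := by
    rw [sub_sub_sub_cancel_right, ← dist_eq_norm, ← dist_eq_norm]
    gcongr
  rw [norm_sub_sq_real (x - p)] at hsq
  linarith

lemma dist_le_of_mem_proj {d : ℕ} {S : Set (EuclideanSpace ℝ (Fin d))}
    {x p q : EuclideanSpace ℝ (Fin d)} (hp : p ∈ proj S x) (hq : q ∈ S) :
    dist x p ≤ dist x q :=
  hp.2 ▸ infDist_le_dist_of_mem hq

lemma inner_le_of_proj_eq_singleton {d : ℕ} {S : Set (EuclideanSpace ℝ (Fin d))}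
    {p u q : EuclideanSpace ℝ (Fin d)} {l : ℝ} (hl : 0 < l) (hproj : proj S (p + l • u) = {p})
    (hq : q ∈ S) : ⟪u, q - p⟫ ≤ (2 * l)⁻¹ * ‖q - p‖ ^ 2 := by
  have hnear := two_mul_inner_le_norm_sq_of_dist_le
    (dist_le_of_mem_proj (hproj ▸ mem_singleton p) hq)
  rw [add_sub_cancel_left, real_inner_smul_left] at hnear
  rw [inv_mul_eq_div, le_div_iff₀ (by positivity)]
  linarith

lemma inner_nonpos_of_mem_Tan {d : ℕ} {S : Set (EuclideanSpace ℝ (Fin d))}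
    {p u w : EuclideanSpace ℝ (Fin d)} {C : ℝ} (hC : 0 ≤ C)
    (hprox : ∀ q ∈ S, ⟪u, q - p⟫ ≤ C * ‖q - p‖ ^ 2) (hw : w ∈ Tan p S) : ⟪u, w⟫ ≤ 0 := by
  rcases hw with rfl | ⟨hw0, hw⟩
  · simp
  suffices ⟪u, ‖w‖⁻¹ • w⟫ ≤ 0 by
    rw [real_inner_smul_right] at this
    exact nonpos_of_mul_nonpos_right this (inv_pos.2 (norm_pos_iff.2 hw0))
  refine nonpos_of_forall_pos_le_mul (K := C + ‖u‖) fun ε hε => ?_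
  obtain ⟨q, hqS, hq0, hqε, hdir⟩ := hw ε hε
  set r := ‖q - p‖
  have hradial : ⟪u, r⁻¹ • (q - p)⟫ ≤ C * ε :=
    calc ⟪u, r⁻¹ • (q - p)⟫ ≤ r⁻¹ * (C * r ^ 2) := by
          rw [real_inner_smul_right]; gcongr; exact hprox q hqS
      _ = C * r := by field_simp
      _ ≤ C * ε := by gcongr
  have hangle : -⟪u, r⁻¹ • (q - p) - ‖w‖⁻¹ • w⟫ ≤ ‖u‖ * ε :=
    calc -⟪u, r⁻¹ • (q - p) - ‖w‖⁻¹ • w⟫ ≤ ‖u‖ * ‖r⁻¹ • (q - p) - ‖w‖⁻¹ • w‖ :=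
          (neg_le_abs _).trans (abs_real_inner_le_norm _ _)
      _ ≤ ‖u‖ * ε := by gcongr
  rw [inner_sub_right] at hangle
  linarith

theorem stmt3_general {d : ℕ} (S : Set (EuclideanSpace ℝ (Fin d)))
    (p : EuclideanSpace ℝ (Fin d))
    (u : EuclideanSpace ℝ (Fin d))
    (hpos : 0 < sSup {l : ℝ | proj S (p + l • u) = {p}}) :
    ∀ w ∈ Tan p S, ⟪u, w⟫ ≤ 0 := by
  intro w hw
  obtain ⟨l, hproj, hl⟩ : ∃ l ∈ {l : ℝ | proj S (p + l • u) = {p}}, 0 < l := by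
    by_contra! h
    exact hpos.not_ge (Real.sSup_nonpos h)
  exact inner_nonpos_of_mem_Tan (by positivity)
    (fun q hq => inner_le_of_proj_eq_singleton hl hproj hq) hw

theorem stmt3 {d : ℕ} (S : Set (EuclideanSpace ℝ (Fin d))) (hS : IsClosed S)
    (p : EuclideanSpace ℝ (Fin d)) (hp : p ∈ S)
    (u : EuclideanSpace ℝ (Fin d)) (hu : ‖u‖ = 1)
    (hBdd : BddAbove {l : ℝ | proj S (p + l • u) = {p}})
    (hpos : 0 < sSup {l : ℝ | proj S (p + l • u) = {p}}) :
    ∀ w ∈ Tan p S, ⟪u, w⟫ ≤ 0 :=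
  stmt3_general S p u hpos
end

section
/- Let S ⊆ ℝ^d be closed, p ∈ S, and u a unit vector with 0 < d(p,u,π_S) < ∞. Then the point p + d(p,u,π_S)·u lies in the closure of the medial axis of S. -/
open Metric Set

def medialAxis {d : ℕ} (S : Set (EuclideanSpace ℝ (Fin d))) :
    Set (EuclideanSpace ℝ (Fin d)) :=
  {x | (proj S x).Nontrivial}

/-!
Suppose `x = p + r • u` is not in the closure of the medial axis. Then the projection is
single-valued, hence continuous, on a small closed ball `B` around `x`, and so the distance to
`S` has directional derivatives `⟪(z - q) / ‖z - q‖, w⟫` on `B`, where `q` is the projection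
of `z`. At a point `z` of `B` where the distance is maximal this forces `z - q` to be the
outward normal of `B` at `z`. Hence `x` lies on the segment from `q` to `z`, so `q` projects `x`, i.e. `q = p`,
and `p` is the unique projection of the point `z` of the ray beyond `x`, contradicting the
maximality of `r`.
-/

open scoped RealInnerProductSpace Topology
open Filter

theorem inner_nonpos_of_norm_add_smul_le {F : Type*} [NormedAddCommGroup F]
    [InnerProductSpace ℝ F] {a w : F} {t : ℝ} (ht : 0 < t) (h : ‖a + t • w‖ ≤ ‖a‖) :
    ⟪a, w⟫ ≤ 0 := by
  have hsq : ‖a + t • w‖ ^ 2 ≤ ‖a‖ ^ 2 := pow_le_pow_left₀ (norm_nonneg _) h 2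
  rw [norm_add_sq_real, real_inner_smul_right, norm_smul, Real.norm_eq_abs, abs_of_pos ht]
    at hsq
  nlinarith [sq_nonneg (t * ‖w‖)]

theorem eq_smul_of_norm_le_of_le_inner {F : Type*} [NormedAddCommGroup F]
    [InnerProductSpace ℝ F] {b n : F} {ρ : ℝ} (hb : b ≠ 0) (hn : ‖n‖ ≤ ρ)
    (h : ρ * ‖b‖ ≤ ⟪b, n⟫) : n = (ρ / ‖b‖) • b := by
  have hbpos : 0 < ‖b‖ := norm_pos_iff.mpr hb
  have hcs := real_inner_le_norm b n
  have hnorm : ‖n‖ = ρ := by nlinarith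
  have hpar : ρ • b = ‖b‖ • n := by
    rw [← hnorm]; exact inner_eq_norm_mul_iff_real.mp (by nlinarith)
  rw [div_eq_inv_mul, mul_smul, hpar, smul_smul, inv_mul_cancel₀ hbpos.ne', one_smul]

section proj

variable {d : ℕ} {S : Set (EuclideanSpace ℝ (Fin d))} {p q x y z : EuclideanSpace ℝ (Fin d)}

theorem proj_nonempty (hS : IsClosed S) (hne : S.Nonempty) (x : EuclideanSpace ℝ (Fin d)) :
    (proj S x).Nonempty := by
  obtain ⟨q, hq, hd⟩ := hS.exists_infDist_eq_dist hne x
  exact ⟨q, hq, hd.symm⟩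

theorem isClosed_graph_proj (hS : IsClosed S) :
    IsClosed {w : EuclideanSpace ℝ (Fin d) × EuclideanSpace ℝ (Fin d) | w.2 ∈ proj S w.1} :=
  (hS.preimage continuous_snd).inter <|
    isClosed_eq (continuous_fst.dist continuous_snd) ((continuous_infDist_pt S).comp continuous_fst)

theorem isClosed_setOf_mem_proj (hS : IsClosed S) (q : EuclideanSpace ℝ (Fin d)) :
    IsClosed {x | q ∈ proj S x} :=
  (isClosed_graph_proj hS).preimage (continuous_id.prodMk continuous_const)

theorem mem_proj_of_mem_segment (hq : q ∈ proj S y) (hz : z ∈ segment ℝ q y) :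
    q ∈ proj S z := by
  refine ⟨hq.1, le_antisymm ?_ (infDist_le_dist_of_mem hq.1)⟩
  rw [le_infDist ⟨q, hq.1⟩]
  intro a ha
  have hqa : dist y q ≤ dist y a := hq.2 ▸ infDist_le_dist_of_mem ha
  have hsum := dist_add_dist_of_mem_segment hz
  have := dist_triangle y z a
  rw [dist_comm q z, dist_comm q y, dist_comm z y] at hsum
  linarith

theorem tendsto_of_mem_proj {α : Type*} {l : Filter α} {x q : α → EuclideanSpace ℝ (Fin d)}
    {q₀ : EuclideanSpace ℝ (Fin d)} (hS : IsClosed S) (hx : Tendsto x l (𝓝 z))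
    (hq : ∀ a, q a ∈ proj S (x a)) (hz : (proj S z).Subsingleton) (hq₀ : q₀ ∈ proj S z) :
    Tendsto q l (𝓝 q₀) := by
  refine (isCompact_closedBall z (infDist z S + 2)).tendsto_nhds_of_unique_mapClusterPt ?_ ?_
  · filter_upwards [Metric.tendsto_nhds.mp hx 1 one_pos] with a ha
    have h1 := dist_triangle (q a) (x a) z
    have h2 : infDist (x a) S ≤ infDist z S + dist (x a) z := infDist_le_infDist_add_dist
    rw [dist_comm (q a) (x a), (hq a).2] at h1
    rw [mem_closedBall]
    linarith
  · intro y _ hcluster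
    have hpair : MapClusterPt (z, y) l fun a => (x a, q a) := by
      rw [mapClusterPt_iff_frequently] at hcluster ⊢
      intro s hs
      obtain ⟨U, hU, V, hV, hUV⟩ := mem_nhds_prod_iff.mp hs
      exact ((hcluster V hV).and_eventually (hx hU)).mono fun a ha => hUV ⟨ha.2, ha.1⟩
    have hy : y ∈ proj S z :=
      (isClosed_graph_proj hS).mem_of_mapClusterPt hpair (Eventually.of_forall hq)
    exact hz hy hq₀

theorem inner_sub_proj_nonpos_of_isMaxOn {K : Set (EuclideanSpace ℝ (Fin d))} (hS : IsClosed S)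
    (hK : Convex ℝ K) (hzK : z ∈ K) (hmax : IsMaxOn (infDist · S) K z)
    (hz : (proj S z).Subsingleton) (hq : q ∈ proj S z) (hy : y ∈ K) :
    ⟪z - q, y - z⟫ ≤ 0 := by
  choose qt hqt using fun t : ℝ => proj_nonempty hS ⟨q, hq.1⟩ (z + t • (y - z))
  have hlim : Tendsto qt (𝓝[>] 0) (𝓝 q) := by
    refine tendsto_of_mem_proj hS ?_ hqt hz hq
    have : Tendsto (fun t : ℝ => z + t • (y - z)) (𝓝 0) (𝓝 (z + (0 : ℝ) • (y - z))) :=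
      (tendsto_id.smul_const _).const_add z
    simpa using this.mono_left nhdsWithin_le_nhds
  have hnonpos : ∀ᶠ t in 𝓝[>] (0 : ℝ), ⟪z - qt t, y - z⟫ ≤ 0 := by
    filter_upwards [Ioc_mem_nhdsGT one_pos] with t ht
    refine inner_nonpos_of_norm_add_smul_le ht.1 ?_
    calc ‖z - qt t + t • (y - z)‖ = infDist (z + t • (y - z)) S := by
          rw [← (hqt t).2, dist_eq_norm, sub_add_eq_add_sub]
      _ ≤ infDist z S := hmax (hK.add_smul_sub_mem hzK hy ⟨ht.1.le, ht.2⟩)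
      _ ≤ ‖z - qt t‖ := dist_eq_norm z (qt t) ▸ infDist_le_dist_of_mem (hqt t).1
  exact le_of_tendsto ((tendsto_const_nhds.sub hlim).inner tendsto_const_nhds) hnonpos

theorem proj_eq_singleton_of_subsingleton_on_closedBall (hS : IsClosed S) (hp : p ∈ proj S x)
    {ρ : ℝ} (hρ0 : 0 < ρ) (hρ : ρ < infDist x S)
    (huniq : ∀ z ∈ closedBall x ρ, (proj S z).Subsingleton) :
    proj S (x + (ρ / dist x p) • (x - p)) = {p} := by
  obtain ⟨z, hzK, hmax⟩ := (isCompact_closedBall x ρ).exists_isMaxOn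
    ⟨x, mem_closedBall_self hρ0.le⟩ (continuous_infDist_pt S).continuousOn
  obtain ⟨q, hq⟩ := proj_nonempty hS ⟨p, hp.1⟩ z
  set b := z - q with hb
  set n := z - x with hn
  set M := ‖b‖ with hM
  have hzM : infDist z S = M := by rw [← hq.2, dist_eq_norm]
  have hρM : ρ < M := hρ.trans_le (hzM ▸ hmax (mem_closedBall_self hρ0.le))
  have hMpos : 0 < M := hρ0.trans hρM
  have hnρ : ‖n‖ ≤ ρ := by rw [hn, ← dist_eq_norm]; exact hzK
  -- test the maximality of `z` against the point of the sphere in the direction of `b`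
  have hyK : x + (ρ / M) • b ∈ closedBall x ρ := by
    rw [mem_closedBall, dist_eq_norm, add_sub_cancel_left, norm_smul, Real.norm_eq_abs,
      abs_of_pos (div_pos hρ0 hMpos), div_mul_cancel₀ _ hMpos.ne']
  have hfirst := inner_sub_proj_nonpos_of_isMaxOn hS (convex_closedBall x ρ) hzK hmax
    (huniq z hzK) hq hyK
  rw [show x + (ρ / M) • b - z = (ρ / M) • b - n by rw [hn]; abel, inner_sub_right,
    real_inner_smul_right, real_inner_self_eq_norm_sq, ← hM,
    show ρ / M * M ^ 2 = ρ * M by field_simp, sub_nonpos] at hfirst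
  have hnb : n = (ρ / M) • b :=
    eq_smul_of_norm_le_of_le_inner (norm_pos_iff.mp hMpos) hnρ hfirst
  have hxq : x - q = (1 - ρ / M) • b := by
    rw [sub_smul, one_smul, ← hnb, hn, hb]; abel
  have hθ : 0 ≤ 1 - ρ / M := by rw [sub_nonneg, div_le_one hMpos]; exact hρM.le
  have hxseg : x ∈ segment ℝ q z := by
    rw [show x = q + (1 - ρ / M) • (z - q) by rw [← hb, ← hxq]; abel]
    exact (convex_segment q z).add_smul_sub_mem (left_mem_segment ℝ q z)
      (right_mem_segment ℝ q z) ⟨hθ, by linarith [div_pos hρ0 hMpos]⟩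
  obtain rfl : q = p :=
    huniq x (mem_closedBall_self hρ0.le) (mem_proj_of_mem_segment hq hxseg) hp
  have hdist : dist x q = M - ρ := by
    rw [dist_eq_norm, hxq, norm_smul, Real.norm_eq_abs, abs_of_nonneg hθ, ← hM]
    field_simp
  have hz : x + (ρ / dist x q) • (x - q) = z := by
    rw [hdist, hxq, smul_smul,
      show ρ / (M - ρ) * (1 - ρ / M) = ρ / M by field_simp [(sub_pos.mpr hρM).ne'],
      ← hnb, hn]
    abel
  rw [hz]
  exact (huniq z hzK).eq_singleton_of_mem hq

theorem mem_proj_add_sSup_smul (hS : IsClosed S) {v : EuclideanSpace ℝ (Fin d)}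
    (hpos : 0 < sSup {l : ℝ | proj S (p + l • v) = {p}}) :
    p ∈ proj S (p + sSup {l : ℝ | proj S (p + l • v) = {p}} • v) := by
  set L := {l : ℝ | proj S (p + l • v) = {p}}
  have hray : ∀ s ∈ Ico 0 (sSup L), p ∈ proj S (p + s • v) := by
    rintro s ⟨hs0, hsr⟩
    have hL : L.Nonempty := nonempty_iff_ne_empty.mpr fun h => by simp [h] at hpos
    obtain ⟨l, hlL, hsl⟩ := exists_lt_of_lt_csSup hL hsr
    have hl0 : 0 < l := hs0.trans_lt hsl
    have hseg : p + s • v ∈ segment ℝ p (p + l • v) := by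
      have := (convex_segment p (p + l • v)).add_smul_sub_mem (left_mem_segment ℝ _ _)
        (right_mem_segment ℝ _ _) ⟨div_nonneg hs0 hl0.le, (div_le_one hl0).2 hsl.le⟩
      rwa [add_sub_cancel_left, smul_smul, div_mul_cancel₀ _ hl0.ne'] at this
    exact mem_proj_of_mem_segment (hlL.symm ▸ rfl) hseg
  have hcl : IsClosed {s : ℝ | p ∈ proj S (p + s • v)} :=
    (isClosed_setOf_mem_proj hS p).preimage (by fun_prop)
  exact (closure_Ico hpos.ne ▸ hcl.closure_subset_iff.mpr hray) ⟨hpos.le, le_rfl⟩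

theorem eventually_subsingleton_proj_on_closedBall (hx : x ∉ closure (medialAxis S)) :
    ∀ᶠ ρ in 𝓝[>] (0 : ℝ), ∀ z ∈ closedBall x ρ, (proj S z).Subsingleton := by
  obtain ⟨ε, hε, hsub⟩ :=
    nhds_basis_closedBall.mem_iff.mp (isClosed_closure.isOpen_compl.mem_nhds hx)
  filter_upwards [Ioo_mem_nhdsGT hε] with ρ hρ z hz
  exact not_nontrivial_iff.mp fun h =>
    hsub (closedBall_subset_closedBall hρ.2.le hz) (subset_closure h)

end proj

theorem stmt7_general {d : ℕ} (S : Set (EuclideanSpace ℝ (Fin d))) (hS : IsClosed S)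
    (p : EuclideanSpace ℝ (Fin d))
    (u : EuclideanSpace ℝ (Fin d)) (hu : ‖u‖ = 1)
    (hBdd : BddAbove {l : ℝ | proj S (p + l • u) = {p}})
    (hpos : 0 < sSup {l : ℝ | proj S (p + l • u) = {p}}) :
    p + sSup {l : ℝ | proj S (p + l • u) = {p}} • u ∈ closure (medialAxis S) := by
  set r := sSup {l : ℝ | proj S (p + l • u) = {p}}
  have hx : p ∈ proj S (p + r • u) := mem_proj_add_sSup_smul hS hpos
  have hxp : dist (p + r • u) p = r := by
    rw [dist_eq_norm, add_sub_cancel_left, norm_smul, hu, Real.norm_eq_abs, abs_of_pos hpos,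
      mul_one]
  by_contra hmed
  obtain ⟨ρ, huniq, hρ0, hρr⟩ :=
    ((eventually_subsingleton_proj_on_closedBall hmed).and (Ioo_mem_nhdsGT hpos)).exists
  have hext := proj_eq_singleton_of_subsingleton_on_closedBall hS hx hρ0
    (by rwa [← hx.2, hxp]) huniq
  rw [hxp, add_sub_cancel_left, smul_smul, div_mul_cancel₀ _ hpos.ne', add_assoc, ← add_smul]
    at hext
  linarith [le_csSup hBdd hext]

theorem stmt7 {d : ℕ} (S : Set (EuclideanSpace ℝ (Fin d))) (hS : IsClosed S)
    (hne : S.Nonempty) (p : EuclideanSpace ℝ (Fin d)) (hp : p ∈ S)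
    (u : EuclideanSpace ℝ (Fin d)) (hu : ‖u‖ = 1)
    (hBdd : BddAbove {l : ℝ | proj S (p + l • u) = {p}})
    (hpos : 0 < sSup {l : ℝ | proj S (p + l • u) = {p}}) :
    p + sSup {l : ℝ | proj S (p + l • u) = {p}} • u ∈ closure (medialAxis S) :=
  stmt7_general S hS p u hu hBdd hpos
end

section
/- Let A be an invertible d×d real matrix with ‖A − I‖ ≤ ε < 1 (operator norm). Let u be a unit vector and u' = (Aᵀ)⁻¹u / |(Aᵀ)⁻¹u|. Then ⟨u, u'⟩ ≥ √(1 − ε²). -/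
open Metric Set ContinuousLinearMap
open scoped RealInnerProductSpace

/-!
Put `v = (Aᵀ)⁻¹ u`. Then `Aᵀ v = u`, so `u - v = (A - I)ᵀ v` has norm at most `ε ‖v‖`.
Expanding `‖u - v‖² ≤ ε² ‖v‖²` gives `2 ⟪u, v⟫ ≥ ‖u‖² + (1 - ε²) ‖v‖²`, and by AM-GM the right
side is at least `2 √(1 - ε²) ‖u‖ ‖v‖`.
-/

theorem sqrt_one_sub_sq_mul_norm_mul_norm_le_inner {E : Type*} [NormedAddCommGroup E]
    [InnerProductSpace ℝ E] {u v : E} {ε : ℝ} (hε₀ : 0 ≤ ε) (hε₁ : ε ≤ 1)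
    (huv : ‖u - v‖ ≤ ε * ‖v‖) :
    √(1 - ε ^ 2) * ‖u‖ * ‖v‖ ≤ ⟪u, v⟫ := by
  set s := √(1 - ε ^ 2)
  have hs : s ^ 2 = 1 - ε ^ 2 := Real.sq_sqrt (by nlinarith)
  have hsq : ‖u‖ ^ 2 - 2 * ⟪u, v⟫ + ‖v‖ ^ 2 ≤ ε ^ 2 * ‖v‖ ^ 2 := by
    rw [← norm_sub_sq_real, ← mul_pow]
    exact pow_le_pow_left₀ (norm_nonneg _) huv 2
  nlinarith [two_mul_le_add_sq ‖u‖ (s * ‖v‖)]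

section Adjoint

variable {𝕜 E : Type*} [RCLike 𝕜] [NormedAddCommGroup E] [InnerProductSpace 𝕜 E]
  [CompleteSpace E]

theorem ContinuousLinearEquiv.adjoint_apply_adjoint_symm_apply (A : E ≃L[𝕜] E) (u : E) :
    adjoint (A : E →L[𝕜] E) (adjoint (A.symm : E →L[𝕜] E) u) = u := by
  rw [← comp_apply, ← adjoint_comp, ContinuousLinearEquiv.coe_symm_comp_coe, adjoint_id,
    id_apply]

theorem ContinuousLinearEquiv.norm_sub_adjoint_symm_apply_le (A : E ≃L[𝕜] E) (u : E) :
    ‖u - adjoint (A.symm : E →L[𝕜] E) u‖ ≤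
      ‖(A : E →L[𝕜] E) - 1‖ * ‖adjoint (A.symm : E →L[𝕜] E) u‖ := by
  set v := adjoint (A.symm : E →L[𝕜] E) u
  have huv : u - v = adjoint ((A : E →L[𝕜] E) - 1) v := by
    rw [LinearIsometryEquiv.map_sub, adjoint_one, sub_apply, A.adjoint_apply_adjoint_symm_apply,
      one_apply_eq_self]
  rw [huv, ← LinearIsometryEquiv.norm_map adjoint ((A : E →L[𝕜] E) - 1)]
  exact le_opNorm _ _

end Adjoint

theorem stmt9 {d : ℕ}
    (A : EuclideanSpace ℝ (Fin d) ≃L[ℝ] EuclideanSpace ℝ (Fin d)) (ε : ℝ)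
    (hε : ε < 1)
    (hA : ‖(A : EuclideanSpace ℝ (Fin d) →L[ℝ] EuclideanSpace ℝ (Fin d)) - 1‖ ≤ ε)
    (u : EuclideanSpace ℝ (Fin d)) (hu : ‖u‖ = 1) :
    ⟪u, ‖ContinuousLinearMap.adjoint
          (A.symm : EuclideanSpace ℝ (Fin d) →L[ℝ] EuclideanSpace ℝ (Fin d)) u‖⁻¹ •
        ContinuousLinearMap.adjoint
          (A.symm : EuclideanSpace ℝ (Fin d) →L[ℝ] EuclideanSpace ℝ (Fin d)) u⟫ ≥
      Real.sqrt (1 - ε ^ 2) := by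
  set v := adjoint (A.symm : EuclideanSpace ℝ (Fin d) →L[ℝ] EuclideanSpace ℝ (Fin d)) u
  have hv : 0 < ‖v‖ := by
    refine norm_pos_iff.mpr
      (ne_zero_of_map (f := adjoint (A : EuclideanSpace ℝ (Fin d) →L[ℝ] _)) ?_)
    rw [A.adjoint_apply_adjoint_symm_apply, ← norm_ne_zero_iff, hu]
    exact one_ne_zero
  have hε₀ : 0 ≤ ε := (norm_nonneg _).trans hA
  have hcos := sqrt_one_sub_sq_mul_norm_mul_norm_le_inner hε₀ hε.le
    ((A.norm_sub_adjoint_symm_apply_le u).trans (mul_le_mul_of_nonneg_right hA (norm_nonneg v)))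
  rw [hu, mul_one] at hcos
  rw [real_inner_smul_right, ge_iff_le, inv_mul_eq_div, le_div_iff₀ hv]
  exact hcos
end

section
/- Let S ⊆ ℝ^d be closed, p ∈ S, u a unit vector with positive projection range, and 0 < λ ≤ d(p,u,π_S). Then the open ball of centre p + λu and radius λ is disjoint from S, and for λ < d(p,u,π_S) the closed ball B(p+λu, λ) meets S exactly in {p}. -/
/-!
Write `c l := p + l • u` and `T := {l | π_S (c l) = {p}}`. For `l ∈ T`, `p` is a nearest point of
`S` to `c l`, so `infDist (c l) S = |l|`. Since `infDist · S` is 1-Lipschitz and `dist (c l) (c λ) = |l - λ|`,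
every `l ∈ T` gives `l - |λ - l| ≤ infDist (c λ) S`; letting `l` approach `sup T ≥ λ` yields
`λ ≤ infDist (c λ) S`, so the open ball misses `S`. If `λ < l ∈ T`, the closed ball `B(c λ, λ)` lies
inside `B(c l, l)`, whose intersection with `S` is exactly the set of nearest points `π_S (c l) = {p}`.
-/

open Metric Set

theorem exists_mem_gt_of_not_bddAbove_or_lt_csSup {α : Type*} [ConditionallyCompleteLinearOrder α]
    {T : Set α} {a : α} (hT : T.Nonempty) (h : ¬BddAbove T ∨ a < sSup T) : ∃ l ∈ T, a < l := by
  rcases h with h | h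
  · simpa using not_bddAbove_iff.mp h a
  · exact exists_lt_of_lt_csSup hT h

section Ray

variable {E : Type*} [NormedAddCommGroup E] [NormedSpace ℝ E] {p u : E}

theorem dist_add_smul_add_smul (hu : ‖u‖ = 1) (a b : ℝ) :
    dist (p + a • u) (p + b • u) = |a - b| := by
  rw [dist_add_left, dist_eq_norm, ← sub_smul, norm_smul, hu, Real.norm_eq_abs, mul_one]

theorem dist_add_smul_self (hu : ‖u‖ = 1) (a : ℝ) : dist (p + a • u) p = |a| := by
  simpa using dist_add_smul_add_smul (p := p) hu a 0

end Ray

section Projection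

variable {d : ℕ} {S : Set (EuclideanSpace ℝ (Fin d))} {x p u : EuclideanSpace ℝ (Fin d)}

theorem closedBall_infDist_inter_eq_proj : closedBall x (infDist x S) ∩ S = proj S x := by
  ext q
  refine ⟨fun ⟨hq, hqS⟩ ↦ ⟨hqS, ?_⟩, fun ⟨hqS, hq⟩ ↦ ⟨?_, hqS⟩⟩
  · rw [mem_closedBall, dist_comm] at hq
    exact le_antisymm hq (infDist_le_dist_of_mem hqS)
  · rw [mem_closedBall, dist_comm, hq]

theorem proj_eq_singleton_of_mem (hp : p ∈ S) : proj S p = {p} := by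
  rw [← closedBall_infDist_inter_eq_proj, infDist_zero_of_mem hp, closedBall_zero]
  exact singleton_inter_of_mem hp

/-- The set whose supremum is the projection range `d(p, u, π_S)`. -/
def projRangeSet (S : Set (EuclideanSpace ℝ (Fin d))) (p u : EuclideanSpace ℝ (Fin d)) : Set ℝ :=
  {l : ℝ | proj S (p + l • u) = {p}}

theorem zero_mem_projRangeSet (hp : p ∈ S) : (0 : ℝ) ∈ projRangeSet S p u := by
  simpa [projRangeSet] using proj_eq_singleton_of_mem hp

theorem infDist_eq_abs_of_mem_projRangeSet (hu : ‖u‖ = 1) {l : ℝ} (hl : l ∈ projRangeSet S p u) :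
    infDist (p + l • u) S = |l| := by
  have hp : p ∈ proj S (p + l • u) := hl.symm ▸ mem_singleton p
  rw [← hp.2, dist_add_smul_self hu]

theorem sub_abs_sub_le_infDist_of_mem_projRangeSet (hu : ‖u‖ = 1) {l : ℝ}
    (hl : l ∈ projRangeSet S p u) (lam : ℝ) : l - |lam - l| ≤ infDist (p + lam • u) S := by
  have hlip := infDist_le_infDist_add_dist (s := S) (x := p + l • u) (y := p + lam • u)
  rw [infDist_eq_abs_of_mem_projRangeSet hu hl, dist_add_smul_add_smul hu, abs_sub_comm] at hlip
  linarith [le_abs_self l]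

theorem le_infDist_of_forall_lt_exists_mem_projRangeSet (hu : ‖u‖ = 1) {lam : ℝ}
    (h : ∀ m < lam, ∃ l ∈ projRangeSet S p u, m < l) : lam ≤ infDist (p + lam • u) S := by
  refine le_of_forall_lt fun c hc ↦ ?_
  obtain ⟨l, hl, hlt⟩ := h ((c + lam) / 2) (by linarith)
  have := sub_abs_sub_le_infDist_of_mem_projRangeSet hu hl lam
  rcases abs_cases (lam - l) with ⟨habs, _⟩ | ⟨habs, _⟩ <;> linarith

end Projection

theorem stmt13_general {d : ℕ} (S : Set (EuclideanSpace ℝ (Fin d)))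
    (p : EuclideanSpace ℝ (Fin d)) (hp : p ∈ S)
    (u : EuclideanSpace ℝ (Fin d)) (hu : ‖u‖ = 1) (lam : ℝ) (hlam : 0 < lam)
    (hle : ¬ BddAbove {l : ℝ | proj S (p + l • u) = {p}} ∨
      lam ≤ sSup {l : ℝ | proj S (p + l • u) = {p}}) :
    Metric.ball (p + lam • u) lam ∩ S = ∅ ∧
    ((¬ BddAbove {l : ℝ | proj S (p + l • u) = {p}} ∨
        lam < sSup {l : ℝ | proj S (p + l • u) = {p}}) →
      Metric.closedBall (p + lam • u) lam ∩ S = {p}) := by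
  have hT : (projRangeSet S p u).Nonempty := ⟨0, zero_mem_projRangeSet hp⟩
  constructor
  · have hinf : lam ≤ infDist (p + lam • u) S :=
      le_infDist_of_forall_lt_exists_mem_projRangeSet hu fun m hm ↦
        exists_mem_gt_of_not_bddAbove_or_lt_csSup hT (hle.imp_right hm.trans_le)
    rw [← disjoint_iff_inter_eq_empty]
    exact disjoint_ball_infDist.mono_left (ball_subset_ball hinf)
  · intro hlt
    obtain ⟨l, hl, hlaml⟩ := exists_mem_gt_of_not_bddAbove_or_lt_csSup hT hlt
    have hball : closedBall (p + lam • u) lam ⊆ closedBall (p + l • u) (infDist (p + l • u) S) := by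
      refine closedBall_subset_closedBall' ?_
      rw [infDist_eq_abs_of_mem_projRangeSet hu hl, dist_add_smul_add_smul hu,
        abs_of_neg (by linarith), abs_of_pos (by linarith)]
      linarith
    refine Subset.antisymm ?_ (singleton_subset_iff.mpr ⟨?_, hp⟩)
    · rw [← show proj S (p + l • u) = {p} from hl, ← closedBall_infDist_inter_eq_proj]
      exact inter_subset_inter_left S hball
    · rw [mem_closedBall, dist_comm, dist_add_smul_self hu, abs_of_pos hlam]

theorem stmt13 {d : ℕ} (S : Set (EuclideanSpace ℝ (Fin d))) (hS : IsClosed S)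
    (p : EuclideanSpace ℝ (Fin d)) (hp : p ∈ S)
    (u : EuclideanSpace ℝ (Fin d)) (hu : ‖u‖ = 1) (lam : ℝ) (hlam : 0 < lam)
    (hle : ¬ BddAbove {l : ℝ | proj S (p + l • u) = {p}} ∨
      lam ≤ sSup {l : ℝ | proj S (p + l • u) = {p}}) :
    Metric.ball (p + lam • u) lam ∩ S = ∅ ∧
    ((¬ BddAbove {l : ℝ | proj S (p + l • u) = {p}} ∨
        lam < sSup {l : ℝ | proj S (p + l • u) = {p}}) →
      Metric.closedBall (p + lam • u) lam ∩ S = {p}) :=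
  stmt13_general S p hp u hu lam hlam hle
end

section
/- Let S ⊆ ℝ^d be a closed set contained in a closed ball B with ∂B ⊆ S. If x ∈ ax(S) and π_S(x) ∩ ∂B = ∅, then x ∈ ax(S \ ∂B). Conversely, if x ∈ ax(S \ ∂B) and some (hence every) q ∈ π_{S\∂B}(x) satisfies dist(x,q) < dist(x, ∂B), then x ∈ ax(S). -/
open Metric Set

section

variable {d : ℕ} {S U : Set (EuclideanSpace ℝ (Fin d))} {x : EuclideanSpace ℝ (Fin d)}

theorem mem_proj_diff_of_mem_proj {p : EuclideanSpace ℝ (Fin d)} (hp : p ∈ proj S x)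
    (hpU : p ∉ U) : p ∈ proj (S \ U) x := by
  have hpSU : p ∈ S \ U := ⟨hp.1, hpU⟩
  refine ⟨hpSU, le_antisymm ?_ (infDist_le_dist_of_mem hpSU)⟩
  calc dist x p = infDist x S := hp.2
    _ ≤ infDist x (S \ U) := infDist_le_infDist_of_subset sdiff_subset ⟨p, hpSU⟩

theorem medialAxis_diff_of_proj_inter_eq_empty (hx : x ∈ medialAxis S)
    (hU : proj S x ∩ U = ∅) : x ∈ medialAxis (S \ U) :=
  hx.mono fun _ hp => mem_proj_diff_of_mem_proj hp fun hpU => hU.subset ⟨hp, hpU⟩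

theorem infDist_diff_eq_of_mem_proj_of_dist_le {q : EuclideanSpace ℝ (Fin d)}
    (hq : q ∈ proj (S \ U) x) (hqU : dist x q ≤ infDist x U) :
    infDist x S = infDist x (S \ U) := by
  refine le_antisymm (infDist_le_infDist_of_subset sdiff_subset ⟨q, hq.1⟩) ?_
  rw [le_infDist ⟨q, hq.1.1⟩]
  intro y hy
  by_cases hyU : y ∈ U
  · calc infDist x (S \ U) = dist x q := hq.2.symm
      _ ≤ infDist x U := hqU
      _ ≤ dist x y := infDist_le_dist_of_mem hyU
  · exact infDist_le_dist_of_mem ⟨hy, hyU⟩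

theorem proj_sdiff_subset_proj_of_mem_proj_of_dist_le {q : EuclideanSpace ℝ (Fin d)}
    (hq : q ∈ proj (S \ U) x) (hqU : dist x q ≤ infDist x U) :
    proj (S \ U) x ⊆ proj S x := fun _ hp =>
  ⟨hp.1.1, hp.2.trans (infDist_diff_eq_of_mem_proj_of_dist_le hq hqU).symm⟩

end

theorem stmt15_general {d : ℕ} (S : Set (EuclideanSpace ℝ (Fin d)))
    (c : EuclideanSpace ℝ (Fin d)) (r : ℝ)
    (x : EuclideanSpace ℝ (Fin d)) :
    (x ∈ medialAxis S → proj S x ∩ Metric.sphere c r = ∅ →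
      x ∈ medialAxis (S \ Metric.sphere c r)) ∧
    (x ∈ medialAxis (S \ Metric.sphere c r) →
      (∃ q ∈ proj (S \ Metric.sphere c r) x,
        dist x q < Metric.infDist x (Metric.sphere c r)) →
      x ∈ medialAxis S) :=
  ⟨medialAxis_diff_of_proj_inter_eq_empty, fun hx ⟨_, hq, hlt⟩ =>
    hx.mono (proj_sdiff_subset_proj_of_mem_proj_of_dist_le hq hlt.le)⟩

theorem stmt15 {d : ℕ} (S : Set (EuclideanSpace ℝ (Fin d))) (hS : IsClosed S)
    (c : EuclideanSpace ℝ (Fin d)) (r : ℝ) (hr : 0 < r)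
    (hSB : S ⊆ Metric.closedBall c r) (hBS : Metric.sphere c r ⊆ S)
    (x : EuclideanSpace ℝ (Fin d)) :
    (x ∈ medialAxis S → proj S x ∩ Metric.sphere c r = ∅ →
      x ∈ medialAxis (S \ Metric.sphere c r)) ∧
    (x ∈ medialAxis (S \ Metric.sphere c r) →
      (∃ q ∈ proj (S \ Metric.sphere c r) x,
        dist x q < Metric.infDist x (Metric.sphere c r)) →
      x ∈ medialAxis S) :=
  stmt15_general S c r x
end
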